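/- Let A be an n×n real matrix with n ≥ 1. Then |trace(Adj A)| ≤ n ‖A‖_{HS}^{n−1} (n−1)^{−(n−1)/2}. -/

import Mathlib

/-!
The diagonal entries of `Adj A` are the principal `(n-1)`-minors of `A`. For an `m × m` matrix
`B`, `(det B)² = det (Bᵀ B)` is the product of the (nonnegative) eigenvalues of `Bᵀ B`, whose sum is
`tr (Bᵀ B) = ‖B‖²_HS`; AM–GM then gives `|det B| ≤ ‖B‖_HS^m m^(-m/2)`. Deleting a row and a column
does not increase the Hilbert–Schmidt norm, and the triangle inequality over the `n` diagonal
entries finishes the proof.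
-/

/-- The Hilbert–Schmidt (Frobenius) norm of a matrix. -/
noncomputable def hsNorm {n : ℕ} (A : Matrix (Fin n) (Fin n) ℝ) : ℝ :=
  Real.sqrt (∑ i, ∑ j, A i j ^ 2)

open Matrix Finset

theorem Real.prod_le_sum_div_card_pow {ι : Type*} [Fintype ι] (z : ι → ℝ) (hz : ∀ i, 0 ≤ z i) :
    ∏ i, z i ≤ ((∑ i, z i) / Fintype.card ι) ^ Fintype.card ι := by
  rcases isEmpty_or_nonempty ι with _ | _
  · simp
  set c : ℕ := Fintype.card ι
  have hc : (0 : ℝ) < c := by positivity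
  have amgm : ∏ i, z i ^ (1 / c : ℝ) ≤ (∑ i, z i) / c := by
    have := Real.geom_mean_le_arith_mean_weighted univ (fun _ ↦ 1 / c) z (fun _ _ ↦ by positivity)
      (by simp [c]) (fun i _ ↦ hz i)
    simpa [← Finset.mul_sum, div_eq_inv_mul] using this
  calc ∏ i, z i = (∏ i, z i ^ (1 / c : ℝ)) ^ c := by
        rw [← Finset.prod_pow]
        refine Finset.prod_congr rfl fun i _ ↦ ?_
        rw [← Real.rpow_mul_natCast (hz i), one_div_mul_cancel hc.ne', Real.rpow_one]
    _ ≤ ((∑ i, z i) / c) ^ c :=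
        pow_le_pow_left₀ (Finset.prod_nonneg fun i _ ↦ by have := hz i; positivity) amgm c

theorem Finset.sum_comp_le_sum_of_injective {α β : Type*} [Fintype α] [Fintype β]
    {g : α → β} (hg : Function.Injective g) {f : β → ℝ} (hf : ∀ b, 0 ≤ f b) :
    ∑ a, f (g a) ≤ ∑ b, f b := by
  simpa using Finset.sum_le_sum_of_subset_of_nonneg (f := f) (subset_univ (univ.map ⟨g, hg⟩))
    fun b _ _ ↦ hf b

theorem Real.rpow_neg_half_natCast (m : ℕ) :
    (m : ℝ) ^ (-((m : ℝ) / 2)) = (√m ^ m)⁻¹ := by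
  rw [Real.rpow_neg (Nat.cast_nonneg m), Real.sqrt_eq_rpow,
    ← Real.rpow_mul_natCast (Nat.cast_nonneg m)]
  ring_nf

theorem Matrix.trace_transpose_mul_self {ι : Type*} [Fintype ι] (B : Matrix ι ι ℝ) :
    (Bᵀ * B).trace = ∑ i, ∑ j, B i j ^ 2 := by
  simp only [trace, diag, mul_apply, transpose_apply, sq]
  exact Finset.sum_comm

theorem Matrix.sq_det_le_sum_sq_div_card_pow {ι : Type*} [Fintype ι] [DecidableEq ι]
    (B : Matrix ι ι ℝ) :
    B.det ^ 2 ≤ ((∑ i, ∑ j, B i j ^ 2) / Fintype.card ι) ^ Fintype.card ι := by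
  have hG : (Bᴴ * B).IsHermitian := isHermitian_conjTranspose_mul_self B
  have hdet : B.det ^ 2 = ∏ i, hG.eigenvalues i := by
    simpa [sq, det_mul, det_conjTranspose] using hG.det_eq_prod_eigenvalues
  have htrace : ∑ i, ∑ j, B i j ^ 2 = ∑ i, hG.eigenvalues i := by
    simpa [← trace_transpose_mul_self] using hG.trace_eq_sum_eigenvalues
  rw [hdet, htrace]
  exact Real.prod_le_sum_div_card_pow _ (eigenvalues_conjTranspose_mul_self_nonneg B)

theorem abs_det_le_hsNorm_pow_mul_rpow {m : ℕ} (B : Matrix (Fin m) (Fin m) ℝ) :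
    |B.det| ≤ hsNorm B ^ m * (m : ℝ) ^ (-((m : ℝ) / 2)) := by
  have hS : 0 ≤ ∑ i, ∑ j, B i j ^ 2 := by positivity
  rw [Real.rpow_neg_half_natCast]
  refine abs_le_of_sq_le_sq ?_ (by unfold hsNorm; positivity)
  calc B.det ^ 2 ≤ ((∑ i, ∑ j, B i j ^ 2) / m) ^ m := by
        simpa using sq_det_le_sum_sq_div_card_pow B
    _ = (hsNorm B ^ m * (√m ^ m)⁻¹) ^ 2 := by
        rw [mul_pow, inv_pow, ← pow_mul, ← pow_mul, mul_comm m 2, pow_mul, pow_mul, hsNorm,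
          Real.sq_sqrt hS, Real.sq_sqrt (Nat.cast_nonneg _), div_pow, div_eq_mul_inv]

theorem hsNorm_submatrix_le {m n : ℕ} (A : Matrix (Fin n) (Fin n) ℝ) {e f : Fin m → Fin n}
    (he : Function.Injective e) (hf : Function.Injective f) :
    hsNorm (A.submatrix e f) ≤ hsNorm A :=
  Real.sqrt_le_sqrt <| (Finset.sum_le_sum fun i _ ↦
    Finset.sum_comp_le_sum_of_injective hf fun j ↦ sq_nonneg (A (e i) j)).trans
    (Finset.sum_comp_le_sum_of_injective he (f := fun i ↦ ∑ j, A i j ^ 2) fun i ↦ by positivity)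

theorem Matrix.adjugate_fin_succ_diag_eq_det_submatrix {R : Type*} [CommRing R] {m : ℕ}
    (A : Matrix (Fin (m + 1)) (Fin (m + 1)) R) (i : Fin (m + 1)) :
    A.adjugate i i = (A.submatrix i.succAbove i.succAbove).det := by
  rw [adjugate_fin_succ_eq_det_submatrix, Even.neg_one_pow ⟨i, rfl⟩, one_mul]

theorem abs_adjugate_diag_le {m : ℕ} (A : Matrix (Fin (m + 1)) (Fin (m + 1)) ℝ) (i : Fin (m + 1)) :
    |A.adjugate i i| ≤ hsNorm A ^ m * (m : ℝ) ^ (-((m : ℝ) / 2)) := by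
  rw [adjugate_fin_succ_diag_eq_det_submatrix]
  refine (abs_det_le_hsNorm_pow_mul_rpow _).trans ?_
  gcongr
  · exact Real.sqrt_nonneg _
  · exact hsNorm_submatrix_le A Fin.succAbove_right_injective Fin.succAbove_right_injective

theorem trace_adjugate_bound_general {n : ℕ} (A : Matrix (Fin n) (Fin n) ℝ) :
    |Matrix.trace A.adjugate| ≤
      (n : ℝ) * hsNorm A ^ (n - 1) * ((n : ℝ) - 1) ^ (-(((n : ℝ) - 1) / 2)) := by
  cases n with
  | zero => simp
  | succ m =>
    calc |A.adjugate.trace| ≤ ∑ i, |A.adjugate i i| := abs_sum_le_sum_abs _ _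
      _ ≤ ∑ _i : Fin (m + 1), hsNorm A ^ m * (m : ℝ) ^ (-((m : ℝ) / 2)) :=
          Finset.sum_le_sum fun i _ ↦ abs_adjugate_diag_le A i
      _ = _ := by simp [mul_assoc]

/-- For an `n×n` real matrix `A` with `n ≥ 1`,
`|trace(Adj A)| ≤ n ‖A‖_HS^(n−1) (n−1)^(−(n−1)/2)`
(with the convention `0^0 = 1` for the real power when `n = 1`). -/
theorem trace_adjugate_bound {n : ℕ} (hn : 1 ≤ n) (A : Matrix (Fin n) (Fin n) ℝ) :
    |Matrix.trace A.adjugate| ≤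
      (n : ℝ) * hsNorm A ^ (n - 1) * ((n : ℝ) - 1) ^ (-(((n : ℝ) - 1) / 2)) :=
  trace_adjugate_bound_general A
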